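/- arXiv:2205.02488 — 2 statements merged into one kernel-verified Lean document; each statement's English description precedes it below -/
import Mathlib

section
/- There exist infinitely many positive integers n such that n²+n+1 is square-free. -/
/-!
If `n² + n + 1` is not square-free, it is divisible by `p²` for a prime `p ≤ n`. Since
`9 ∤ n² + n + 1`, we have `p ≠ 3`, so `n` has order `3` modulo `p` and `p ≡ 1 (mod 6)`.
As `(a - b)(a + b + 1) = f(a) - f(b)` for `f(n) = n² + n + 1`, and `p` cannot divide both
factors, the roots of `f` modulo `p²` lie in at most two residue classes. Hence at most
`∑ 2 (x / p² + 1) ≤ 2x ∑_{p > 6} p⁻² + 2 (x / 6 + 1) ≤ 2x / 3 + 2` of the `n < x` are bad,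
and at least `x / 3 - 2` are good.
-/

open Finset

theorem orderOf_eq_three_of_sq_add_self_add_one_eq_zero {R : Type*} [CommRing R] {a : R}
    (ha : a ^ 2 + a + 1 = 0) (h3 : (3 : R) ≠ 0) : orderOf a = 3 := by
  have : Fact (Nat.Prime 3) := ⟨Nat.prime_three⟩
  refine orderOf_eq_prime ?_ ?_
  · linear_combination (a - 1) * ha
  · rintro rfl
    exact h3 (by linear_combination ha)

theorem Nat.Prime.mod_three_eq_one_of_dvd_sq_add_self_add_one {p n : ℕ} (hp : p.Prime)
    (hp3 : p ≠ 3) (h : p ∣ n ^ 2 + n + 1) : p % 3 = 1 := by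
  have : Fact p.Prime := ⟨hp⟩
  have hroot : (n : ZMod p) ^ 2 + n + 1 = 0 := by
    exact_mod_cast (ZMod.natCast_eq_zero_iff _ p).2 h
  have h3 : (3 : ZMod p) ≠ 0 := by
    rw [ne_eq, ← Nat.cast_ofNat, ZMod.natCast_eq_zero_iff,
      Nat.prime_dvd_prime_iff_eq hp Nat.prime_three]
    exact hp3
  have hn : (n : ZMod p) ≠ 0 := by
    rintro h0
    simp [h0] at hroot
  have h3dvd := orderOf_eq_three_of_sq_add_self_add_one_eq_zero hroot h3 ▸
    ZMod.orderOf_dvd_card_sub_one hn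
  have := hp.two_le
  omega

theorem not_nine_dvd_sq_add_self_add_one (n : ℕ) : ¬ 9 ∣ n ^ 2 + n + 1 := by
  rw [← ZMod.natCast_eq_zero_iff]
  push_cast
  generalize (n : ZMod 9) = a
  revert a
  decide

theorem Prime.sq_dvd_sub_or_sq_dvd_add_add_one {R : Type*} [CommRing R] [IsDomain R] {p a b : R}
    (hp : Prime p) (hp3 : ¬ p ∣ 3) (ha : p ^ 2 ∣ a ^ 2 + a + 1) (hb : p ^ 2 ∣ b ^ 2 + b + 1) :
    p ^ 2 ∣ a - b ∨ p ^ 2 ∣ a + b + 1 := by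
  have hprod : p ^ 2 ∣ (a - b) * (a + b + 1) := by
    convert dvd_sub ha hb using 1
    ring
  by_cases hsum : p ∣ a + b + 1
  · right
    refine hp.pow_dvd_of_dvd_mul_left 2 (fun hdiff => hp3 ?_) hprod
    have h2a : p ∣ 2 * a + 1 := by
      convert dvd_add hdiff hsum using 1
      ring
    have hfa : p ∣ a ^ 2 + a + 1 := (dvd_pow_self p two_ne_zero).trans ha
    -- `(2a + 1)² = 4 (a² + a + 1) - 3`
    convert dvd_sub (hfa.mul_left 4) (h2a.mul_left (2 * a + 1)) using 1
    ring
  · exact .inl (hp.pow_dvd_of_dvd_mul_right 2 hsum hprod)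

theorem card_le_div_add_one_of_forall_modEq {m x : ℕ} (hm : 0 < m) {s : Finset ℕ}
    (hs : s ⊆ range x) (h : ∀ a ∈ s, ∀ b ∈ s, a ≡ b [MOD m]) : #s ≤ x / m + 1 := by
  obtain rfl | ⟨a, ha⟩ := s.eq_empty_or_nonempty
  · simp
  calc #s ≤ #{n ∈ range x | n ≡ a [MOD m]} :=
        card_le_card fun n hn => mem_filter.2 ⟨hs hn, h n hn a ha⟩
    _ = x / m + if a % m < x % m then 1 else 0 := by
        rw [← Nat.count_eq_card_filter_range, Nat.count_modEq_card _ hm]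
    _ ≤ x / m + 1 := by split_ifs <;> omega

theorem card_filter_sq_dvd_sq_add_self_add_one_le {p : ℕ} (hp : p.Prime) (hp3 : p ≠ 3) (x : ℕ) :
    #{n ∈ range x | p ^ 2 ∣ n ^ 2 + n + 1} ≤ 2 * (x / p ^ 2 + 1) := by
  set T := {n ∈ range x | p ^ 2 ∣ n ^ 2 + n + 1}
  obtain hT | ⟨n₀, hn₀⟩ := T.eq_empty_or_nonempty
  · simp [hT]
  have hm : 0 < p ^ 2 := pow_pos hp.pos 2
  have hpz : Prime (p : ℤ) := Nat.prime_iff_prime_int.1 hp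
  have hp3z : ¬ (p : ℤ) ∣ 3 := by
    exact_mod_cast fun h => hp3 ((Nat.prime_dvd_prime_iff_eq hp Nat.prime_three).1 h)
  have two_classes : ∀ n ∈ T, n₀ ≡ n [MOD p ^ 2] ∨ (p : ℤ) ^ 2 ∣ n + n₀ + 1 := by
    intro n hn
    rw [Nat.modEq_iff_dvd]
    push_cast
    exact hpz.sq_dvd_sub_or_sq_dvd_add_add_one hp3z (by exact_mod_cast (mem_filter.1 hn).2)
      (by exact_mod_cast (mem_filter.1 hn₀).2)
  rw [← card_filter_add_card_filter_not (fun n => n₀ ≡ n [MOD p ^ 2]), two_mul]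
  gcongr
  · refine card_le_div_add_one_of_forall_modEq hm ((filter_subset _ _).trans (filter_subset _ _)) ?_
    intro a ha b hb
    exact (mem_filter.1 ha).2.symm.trans (mem_filter.1 hb).2
  · refine card_le_div_add_one_of_forall_modEq hm ((filter_subset _ _).trans (filter_subset _ _)) ?_
    intro a ha b hb
    have ha' := (two_classes a (mem_filter.1 ha).1).resolve_left (mem_filter.1 ha).2
    have hb' := (two_classes b (mem_filter.1 hb).1).resolve_left (mem_filter.1 hb).2
    rw [Nat.modEq_iff_dvd, Nat.cast_pow,
      show (b : ℤ) - a = (b + n₀ + 1) - (a + n₀ + 1) by ring]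
    exact dvd_sub hb' ha'

theorem exists_prime_sq_dvd_sq_add_self_add_one {n : ℕ} (h : ¬ Squarefree (n ^ 2 + n + 1)) :
    ∃ p, p.Prime ∧ p % 6 = 1 ∧ p ≤ n ∧ p ^ 2 ∣ n ^ 2 + n + 1 := by
  simp only [Nat.squarefree_iff_prime_squarefree, not_forall, not_not, ← sq] at h
  obtain ⟨p, hp, hdvd⟩ := h
  have hp3 : p ≠ 3 := by
    rintro rfl
    exact not_nine_dvd_sq_add_self_add_one n hdvd
  have hmod3 := hp.mod_three_eq_one_of_dvd_sq_add_self_add_one hp3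
    ((dvd_pow_self p two_ne_zero).trans hdvd)
  have hodd : p % 2 = 1 := hp.eq_two_or_odd.resolve_left (by rintro rfl; omega)
  refine ⟨p, hp, by omega, ?_, hdvd⟩
  by_contra! hlt
  have := Nat.le_of_dvd (by positivity) hdvd
  nlinarith [Nat.mul_le_mul hlt hlt, hp.two_le]

theorem sum_inv_sq_le_inv {k : ℕ} (hk : k ≠ 0) {s : Finset ℕ} (hs : ∀ i ∈ s, k < i) :
    ∑ i ∈ s, ((i : ℚ) ^ 2)⁻¹ ≤ 1 / k := by
  have hsub : s ⊆ Ioc k (k + s.sup id) := fun i hi =>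
    mem_Ioc.2 ⟨hs i hi, le_add_left (le_sup (f := id) hi)⟩
  calc ∑ i ∈ s, ((i : ℚ) ^ 2)⁻¹ ≤ ∑ i ∈ Ioc k (k + s.sup id), ((i : ℚ) ^ 2)⁻¹ :=
        sum_le_sum_of_subset_of_nonneg hsub fun _ _ _ => by positivity
    _ ≤ (k : ℚ)⁻¹ - ((k + s.sup id : ℕ) : ℚ)⁻¹ := sum_Ioc_inv_sq_le_sub hk (Nat.le_add_right _ _)
    _ ≤ 1 / k := by
        rw [one_div, sub_le_self_iff]
        positivity

theorem card_filter_not_squarefree_sq_add_self_add_one_le (x : ℕ) :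
    (#{n ∈ range x | ¬ Squarefree (n ^ 2 + n + 1)} : ℚ) ≤ 2 * x / 3 + 2 := by
  set P := {p ∈ range x | p.Prime ∧ p % 6 = 1}
  have hP : ∀ p ∈ P, p.Prime ∧ p % 6 = 1 ∧ p < x := fun p hp => by
    simp only [P, mem_filter, mem_range] at hp
    exact ⟨hp.2.1, hp.2.2, hp.1⟩
  have hcover : {n ∈ range x | ¬ Squarefree (n ^ 2 + n + 1)} ⊆
      P.biUnion fun p => {n ∈ range x | p ^ 2 ∣ n ^ 2 + n + 1} := by
    intro n hn
    obtain ⟨hnx, hn⟩ := mem_filter.1 hn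
    obtain ⟨p, hp, hp6, hpn, hdvd⟩ := exists_prime_sq_dvd_sq_add_self_add_one hn
    have hpx : p < x := hpn.trans_lt (mem_range.1 hnx)
    exact mem_biUnion.2 ⟨p, mem_filter.2 ⟨mem_range.2 hpx, hp, hp6⟩, mem_filter.2 ⟨hnx, hdvd⟩⟩
  have hcount : #{n ∈ range x | ¬ Squarefree (n ^ 2 + n + 1)} ≤ ∑ p ∈ P, 2 * (x / p ^ 2 + 1) :=
    (card_le_card hcover).trans <| card_biUnion_le.trans <| sum_le_sum fun p hp =>
      card_filter_sq_dvd_sq_add_self_add_one_le (hP p hp).1 (by have := (hP p hp).2.1; omega) x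
  have hsum : ∑ p ∈ P, ((p : ℚ) ^ 2)⁻¹ ≤ 1 / 6 := by
    have hP6 : ∀ p ∈ P, 6 < p := fun p hp => by
      have := (hP p hp).1.two_le
      have := (hP p hp).2.1
      omega
    exact_mod_cast sum_inv_sq_le_inv (k := 6) (by norm_num) hP6
  have hcard : (#P : ℚ) ≤ x / 6 + 1 := by
    have := card_le_div_add_one_of_forall_modEq (m := 6) (by norm_num) (filter_subset _ _)
      fun a ha b hb => (hP a ha).2.1.trans (hP b hb).2.1.symm
    have hdiv : ((x / 6 : ℕ) : ℚ) ≤ x / 6 := Nat.cast_div_le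
    exact (Nat.cast_le.2 this).trans (by push_cast; linarith)
  calc (#{n ∈ range x | ¬ Squarefree (n ^ 2 + n + 1)} : ℚ)
      ≤ ∑ p ∈ P, 2 * ((x : ℚ) * ((p : ℚ) ^ 2)⁻¹ + 1) := by
        refine (Nat.cast_le.2 hcount).trans ?_
        push_cast
        gcongr with p
        exact Nat.cast_div_le.trans_eq (by rw [Nat.cast_pow, div_eq_mul_inv])
    _ = 2 * x * ∑ p ∈ P, ((p : ℚ) ^ 2)⁻¹ + 2 * #P := by
        simp only [mul_add, sum_add_distrib, sum_const, nsmul_eq_mul, mul_sum, mul_assoc,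
          mul_one, mul_comm (#P : ℚ)]
    _ ≤ 2 * x * (1 / 6) + 2 * (x / 6 + 1) := by gcongr
    _ = 2 * x / 3 + 2 := by ring

theorem le_card_filter_squarefree_sq_add_self_add_one (x : ℕ) :
    (x : ℚ) / 3 - 2 ≤ #{n ∈ range x | Squarefree (n ^ 2 + n + 1)} := by
  have hsplit : (#{n ∈ range x | Squarefree (n ^ 2 + n + 1)} : ℚ)
      + #{n ∈ range x | ¬ Squarefree (n ^ 2 + n + 1)} = x := by
    exact_mod_cast (card_filter_add_card_filter_not _).trans (card_range x)
  linarith [card_filter_not_squarefree_sq_add_self_add_one_le x]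

/-- There exist infinitely many positive integers `n` such that `n² + n + 1` is square-free. -/
theorem stmt1 : {n : ℕ | 0 < n ∧ Squarefree (n ^ 2 + n + 1)}.Infinite := by
  refine Set.infinite_of_forall_exists_gt fun N => ?_
  by_contra! hN
  have hgood : #{n ∈ range (3 * N + 12) | Squarefree (n ^ 2 + n + 1)} ≤ N + 1 := by
    refine (card_le_card fun n hn => ?_).trans (card_range (N + 1)).le
    rcases n.eq_zero_or_pos with rfl | hpos
    · simp
    · exact mem_range.2 (Nat.lt_succ_of_le (hN n ⟨hpos, (mem_filter.1 hn).2⟩))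
  have hgood' := le_card_filter_squarefree_sq_add_self_add_one (3 * N + 12)
  have : (#{n ∈ range (3 * N + 12) | Squarefree (n ^ 2 + n + 1)} : ℚ) ≤ N + 1 := by
    exact_mod_cast hgood
  push_cast at hgood'
  linarith
end

section
/- Let n ≥ 7 be an integer with 3 ∤ n and let z be an integer with z² + z + 1 ≡ 0 (mod n). Then there exist a positive integer x and a nonzero integer y with gcd(x,y) = 1, x² + xy + y² = n and x ≡ z·y (mod n). -/
/-!
By Thue's pigeonhole argument there is a pair `(x, y) ≠ (0, 0)` with `x², y² ≤ n` and
`x ≡ z y (mod n)`. The identity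
`x² + xy + y² = (x - z y)(x + (z + 1) y) + y² (z² + z + 1)` makes `n` divide
`x² + xy + y²`, which lies in `(0, 3n]`, so it equals `n`, `2n` or `3n`. The value `2n`
would force `x, y` even and then `n` even, while `n` divides the odd number `z² + z + 1`;
the value `3n` forces `x = y` and `x ∣ 3`, so `n = x² ∣ 9`. Hence `x² + xy + y² = n`, and a
common factor `d` of `x, y` would give `d m ∣ m` for `m = n / d²`.
-/

theorem Int.exists_ne_zero_sq_le_dvd_sub_mul {n : ℤ} (hn : 0 < n) (z : ℤ) :
    ∃ x y : ℤ, (x ≠ 0 ∨ y ≠ 0) ∧ x ^ 2 ≤ n ∧ y ^ 2 ≤ n ∧ n ∣ x - z * y := by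
  lift n to ℕ using hn.le
  have : NeZero n := ⟨by omega⟩
  set k := Nat.sqrt n
  have hcard :
      Fintype.card (ZMod n) < Fintype.card (Fin (k + 1) × Fin (k + 1)) := by
    simpa [ZMod.card, sq] using Nat.lt_succ_sqrt n
  obtain ⟨p, q, hpq, hpq_eq⟩ := Fintype.exists_ne_map_eq_of_card_lt
    (fun p : Fin (k + 1) × Fin (k + 1) => ((p.1 : ℕ) : ZMod n) - z * ((p.2 : ℕ) : ZMod n))
    hcard
  have hbound (a b : Fin (k + 1)) : ((a : ℤ) - b) ^ 2 ≤ n := by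
    have hk : ((a : ℤ) - b) ^ 2 ≤ (k : ℤ) ^ 2 := by
      rw [← sq_abs]
      gcongr
      exact abs_sub_le_of_nonneg_of_le (by positivity) (by omega) (by positivity) (by omega)
    exact hk.trans (by exact_mod_cast Nat.sqrt_le' n)
  refine ⟨(p.1 : ℤ) - q.1, (p.2 : ℤ) - q.2, ?_, hbound _ _, hbound _ _, ?_⟩
  · by_contra! h
    exact hpq (Prod.ext (Fin.ext (by omega)) (Fin.ext (by omega)))
  · rw [← ZMod.intCast_zmod_eq_zero_iff_dvd]
    push_cast
    linear_combination hpq_eq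

theorem dvd_sq_add_mul_add_sq {R : Type*} [CommRing R] {n x y z : R}
    (hxy : n ∣ x - z * y) (hz : n ∣ z ^ 2 + z + 1) : n ∣ x ^ 2 + x * y + y ^ 2 := by
  have h : x ^ 2 + x * y + y ^ 2 = (x - z * y) * (x + (z + 1) * y) + y ^ 2 * (z ^ 2 + z + 1) := by
    ring
  rw [h]
  exact dvd_add (dvd_mul_of_dvd_left hxy _) (dvd_mul_of_dvd_right hz _)

theorem dvd_three_of_dvd_one_sub {R : Type*} [CommRing R] {x z : R}
    (h1 : x ∣ 1 - z) (h2 : x ∣ z ^ 2 + z + 1) : x ∣ 3 := by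
  have h : (3 : R) = z ^ 2 + z + 1 + (1 - z) * (z + 2) := by ring
  rw [h]
  exact dvd_add h2 (dvd_mul_of_dvd_left h1 _)

section Ordered

variable {R : Type*} [CommRing R] [LinearOrder R] [IsStrictOrderedRing R] {n x y : R}

theorem sq_add_mul_add_sq_pos (h : x ≠ 0 ∨ y ≠ 0) : 0 < x ^ 2 + x * y + y ^ 2 := by
  rcases h with h | h
  · have := pow_pos (abs_pos.mpr h) 2
    nlinarith [sq_nonneg (x + 2 * y), sq_abs x]
  · have := pow_pos (abs_pos.mpr h) 2
    nlinarith [sq_nonneg (2 * x + y), sq_abs y]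

theorem sq_add_mul_add_sq_le_three_mul (hx : x ^ 2 ≤ n) (hy : y ^ 2 ≤ n) :
    x ^ 2 + x * y + y ^ 2 ≤ 3 * n := by
  nlinarith [sq_nonneg (x - y)]

theorem eq_of_sq_add_mul_add_sq_eq_three_mul (hx : x ^ 2 ≤ n) (hy : y ^ 2 ≤ n)
    (h : x ^ 2 + x * y + y ^ 2 = 3 * n) : x = y := by
  have h0 : (x - y) ^ 2 = 0 := by nlinarith [sq_nonneg (x - y)]
  exact sub_eq_zero.mp (pow_eq_zero_iff two_ne_zero |>.mp h0)

end Ordered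

section Int

variable {n x y z : ℤ}

theorem sq_add_mul_add_sq_ne_two_mul (hz : n ∣ z ^ 2 + z + 1) :
    x ^ 2 + x * y + y ^ 2 ≠ 2 * n := by
  intro h
  have hz_odd : ¬ Even (z ^ 2 + z + 1) := by simp [parity_simps, ← Int.not_even_iff_odd]
  have hn_odd : ¬ Even n := fun hn =>
    hz_odd (even_iff_two_dvd.mpr ((even_iff_two_dvd.mp hn).trans hz))
  obtain ⟨⟨a, rfl⟩, ⟨b, rfl⟩⟩ : Even x ∧ Even y := by
    have hQ : Even (x ^ 2 + x * y + y ^ 2) := h ▸ even_two_mul n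
    simp only [Int.even_add, Int.even_pow, Int.even_mul, ne_eq, OfNat.ofNat_ne_zero,
      not_false_eq_true, and_true, iff_self_or] at hQ
    tauto
  exact hn_odd ⟨a ^ 2 + a * b + b ^ 2, by linarith⟩

theorem sq_add_mul_add_sq_ne_three_mul (hn : 7 ≤ n) (h3 : ¬ 3 ∣ n) (hx : x ^ 2 ≤ n)
    (hy : y ^ 2 ≤ n) (hxy : n ∣ x - z * y) (hz : n ∣ z ^ 2 + z + 1) :
    x ^ 2 + x * y + y ^ 2 ≠ 3 * n := by
  intro h
  obtain rfl := eq_of_sq_add_mul_add_sq_eq_three_mul hx hy h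
  have hn_eq : x ^ 2 = n := by linarith
  have hx0 : x ≠ 0 := by rintro rfl; omega
  have h1 : x ∣ 1 - z := (mul_dvd_mul_iff_left hx0).mp (by
    rwa [← sq, hn_eq, show x * (1 - z) = x - z * x by ring])
  have hx3 : x ∣ 3 :=
    dvd_three_of_dvd_one_sub h1 ((Dvd.intro_left x (by rw [← sq, hn_eq])).trans hz)
  have h9 : n ∣ 9 := by simpa [hn_eq] using pow_dvd_pow_of_dvd hx3 2
  have := Int.le_of_dvd (by norm_num) h9
  interval_cases n <;> omega

theorem isCoprime_of_sq_add_mul_add_sq_eq (hn : n ≠ 0) (h : x ^ 2 + x * y + y ^ 2 = n)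
    (hxy : n ∣ x - z * y) (hz : n ∣ z ^ 2 + z + 1) : IsCoprime x y := by
  obtain ⟨a, ha⟩ := Int.gcd_dvd_left x y
  obtain ⟨b, hb⟩ := Int.gcd_dvd_right x y
  set d : ℤ := (Int.gcd x y : ℤ)
  set m := a ^ 2 + a * b + b ^ 2
  have hnm : n = d * (d * m) := by rw [← h, ha, hb]; ring
  have hd : d ≠ 0 := fun h0 => hn (by simp [hnm, h0])
  have hm : m ≠ 0 := fun h0 => hn (by simp [hnm, h0])
  have h1 : d * m ∣ a - z * b := (mul_dvd_mul_iff_left hd).mp (by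
    rwa [← hnm, show d * (a - z * b) = x - z * y by rw [ha, hb]; ring])
  have h2 : d * m ∣ z ^ 2 + z + 1 := (Dvd.intro_left d hnm.symm).trans hz
  have hd1 : d ∣ 1 := (mul_dvd_mul_iff_right hm).mp (by simpa using dvd_sq_add_mul_add_sq h1 h2)
  have hd_eq : d = 1 := Int.eq_one_of_dvd_one (by positivity) hd1
  exact Int.isCoprime_iff_gcd_eq_one.mpr (Nat.cast_eq_one.mp hd_eq)

theorem exists_pos_isCoprime_of_sq_add_mul_add_sq_eq (hn : 1 < n)
    (h : x ^ 2 + x * y + y ^ 2 = n) (hxy : n ∣ x - z * y) (hz : n ∣ z ^ 2 + z + 1) :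
    ∃ x y : ℤ, 0 < x ∧ y ≠ 0 ∧ IsCoprime x y ∧ x ^ 2 + x * y + y ^ 2 = n ∧
      n ∣ x - z * y := by
  have hcop := isCoprime_of_sq_add_mul_add_sq_eq (by omega) h hxy hz
  have hx0 : x ≠ 0 := by
    rintro rfl
    rcases Int.isUnit_iff.mp (isCoprime_zero_left.mp hcop) with rfl | rfl <;> omega
  have hy0 : y ≠ 0 := by
    rintro rfl
    rcases Int.isUnit_iff.mp (isCoprime_zero_right.mp hcop) with rfl | rfl <;> omega
  rcases hx0.lt_or_gt with hx | hx
  · refine ⟨-x, -y, by omega, neg_ne_zero.mpr hy0, hcop.neg_neg, by linear_combination h, ?_⟩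
    rw [show -x - z * -y = -(x - z * y) by ring]
    exact hxy.neg_right
  · exact ⟨x, y, hx, hy0, hcop, h, hxy⟩

end Int

/-- Surjectivity: if `n ≥ 7`, `3 ∤ n` and `z² + z + 1 ≡ 0 (mod n)`, then there exist a
positive integer `x` and a nonzero integer `y` with `gcd(x,y) = 1`, `x² + xy + y² = n`
and `x ≡ z y (mod n)`. -/
theorem stmt6 (n z : ℤ) (hn : 7 ≤ n) (h3 : ¬ (3 ∣ n)) (hz : n ∣ z ^ 2 + z + 1) :
    ∃ x y : ℤ, 0 < x ∧ y ≠ 0 ∧ IsCoprime x y ∧ x ^ 2 + x * y + y ^ 2 = n ∧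
      n ∣ x - z * y := by
  obtain ⟨x, y, hne, hx, hy, hxy⟩ := Int.exists_ne_zero_sq_le_dvd_sub_mul (by omega : 0 < n) z
  obtain ⟨c, hc⟩ := dvd_sq_add_mul_add_sq hxy hz
  have hc_pos : 0 < c := pos_of_mul_pos_right (hc ▸ sq_add_mul_add_sq_pos hne) (by omega)
  have hc_le : c ≤ 3 :=
    le_of_mul_le_mul_left (hc ▸ mul_comm n 3 ▸ sq_add_mul_add_sq_le_three_mul hx hy) (by omega)
  interval_cases c
  · exact exists_pos_isCoprime_of_sq_add_mul_add_sq_eq (by omega) (by rw [hc, mul_one]) hxy hz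
  · exact absurd (hc.trans (mul_comm n 2)) (sq_add_mul_add_sq_ne_two_mul hz)
  · exact absurd (hc.trans (mul_comm n 3)) (sq_add_mul_add_sq_ne_three_mul hn h3 hx hy hxy hz)
end
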